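/- arXiv:2004.00054 — 4 statements merged into one kernel-verified Lean document; each statement's English description precedes it below -/
import Mathlib

section
/- For every 2×2 real matrix A and every (θ,φ,r) ∈ ℝ × ℝ × (−π/4, π/4), the vector ξ_A · Φ(θ,φ,r) ∈ ℝ⁴ (which equals d/dt|_{t=0} exp(t ξ_A)·Φ(θ,φ,r)) satisfies ξ_A · Φ(θ,φ,r) = cot(π/4+r)·(∂ψ_A/∂θ)(θ,φ)·(∂Φ/∂θ)(θ,φ,r) − tan(π/4+r)·(∂ψ_A/∂φ)(θ,φ)·(∂Φ/∂φ)(θ,φ,r) + ψ_A(θ,φ)·(∂Φ/∂r)(θ,φ,r). (This is the explicit formula, in Fermi coordinates, for the Killing field of S³ generated by ξ_A.) -/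
open Real Matrix

/-- The function `ψ_A` on the torus associated with a `2 × 2` matrix `A`. -/
noncomputable def psiFun (A : Matrix (Fin 2) (Fin 2) ℝ) (θ φ : ℝ) : ℝ :=
  A 0 0 * Real.cos θ * Real.cos φ + A 0 1 * Real.cos θ * Real.sin φ +
    A 1 0 * Real.sin θ * Real.cos φ + A 1 1 * Real.sin θ * Real.sin φ

/-- The antisymmetric `4 × 4` matrix `ξ_A = [[0, A], [−Aᵀ, 0]]`. -/
def xiMat (A : Matrix (Fin 2) (Fin 2) ℝ) : Matrix (Fin 4) (Fin 4) ℝ :=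
  !![0, 0, A 0 0, A 0 1;
     0, 0, A 1 0, A 1 1;
     -A 0 0, -A 1 0, 0, 0;
     -A 0 1, -A 1 1, 0, 0]

/-- The Fermi parametrisation of `S³` about the standard Clifford torus. -/
noncomputable def FermiPhi (θ φ r : ℝ) : Fin 4 → ℝ :=
  ![Real.sin (π/4 + r) * Real.cos θ, Real.sin (π/4 + r) * Real.sin θ,
    Real.sin (π/4 - r) * Real.cos φ, Real.sin (π/4 - r) * Real.sin φ]

/-!
Write `u θ = (cos θ, sin θ)`, so that `ψ_A(θ, φ) = u θ ⬝ A u φ`, `∂ψ_A/∂θ (θ, φ) = ψ_A(θ + π/2, φ)`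
and `Φ = (s u θ, c u φ)` with `s = sin (π/4 + r)`, `c = cos (π/4 + r) = sin (π/4 - r)`.
Expanding `A u φ` in the orthonormal frame `(u θ, u (θ + π/2))` gives
`A u φ = ψ_A u θ + ∂_θ ψ_A u (θ + π/2)`, and likewise `Aᵀ u θ = ψ_A u φ + ∂_φ ψ_A u (φ + π/2)`.
Since `ξ_A Φ = (c A u φ, -s Aᵀ u θ)`, `cot · s = c` and `tan · c = s`, these two expansions are exactly the claimed formula.
-/

lemma psiFun_eq_cos_mul_add_sin_mul (A : Matrix (Fin 2) (Fin 2) ℝ) (θ φ : ℝ) :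
    psiFun A θ φ =
      cos θ * (A 0 0 * cos φ + A 0 1 * sin φ) + sin θ * (A 1 0 * cos φ + A 1 1 * sin φ) := by
  rw [psiFun]
  ring

lemma psiFun_transpose (A : Matrix (Fin 2) (Fin 2) ℝ) (θ φ : ℝ) :
    psiFun Aᵀ φ θ = psiFun A θ φ := by
  simp only [psiFun, transpose_apply]
  ring

lemma hasDerivAt_psiFun_left (A : Matrix (Fin 2) (Fin 2) ℝ) (θ φ : ℝ) :
    HasDerivAt (fun θ' => psiFun A θ' φ) (psiFun A (θ + π / 2) φ) θ := by
  simp only [psiFun_eq_cos_mul_add_sin_mul, cos_add_pi_div_two, sin_add_pi_div_two]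
  exact ((hasDerivAt_cos θ).mul_const _).add ((hasDerivAt_sin θ).mul_const _)

lemma hasDerivAt_psiFun_right (A : Matrix (Fin 2) (Fin 2) ℝ) (θ φ : ℝ) :
    HasDerivAt (fun φ' => psiFun A θ φ') (psiFun A θ (φ + π / 2)) φ := by
  simpa only [psiFun_transpose] using hasDerivAt_psiFun_left Aᵀ φ θ

lemma psiFun_mul_cos_sub_left (A : Matrix (Fin 2) (Fin 2) ℝ) (θ φ : ℝ) :
    psiFun A θ φ * cos θ - psiFun A (θ + π / 2) φ * sin θ = A 0 0 * cos φ + A 0 1 * sin φ := by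
  simp only [psiFun_eq_cos_mul_add_sin_mul, cos_add_pi_div_two, sin_add_pi_div_two]
  linear_combination (A 0 0 * cos φ + A 0 1 * sin φ) * cos_sq_add_sin_sq θ

lemma psiFun_mul_sin_add_left (A : Matrix (Fin 2) (Fin 2) ℝ) (θ φ : ℝ) :
    psiFun A θ φ * sin θ + psiFun A (θ + π / 2) φ * cos θ = A 1 0 * cos φ + A 1 1 * sin φ := by
  simp only [psiFun_eq_cos_mul_add_sin_mul, cos_add_pi_div_two, sin_add_pi_div_two]
  linear_combination (A 1 0 * cos φ + A 1 1 * sin φ) * cos_sq_add_sin_sq θ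

lemma psiFun_mul_cos_sub_right (A : Matrix (Fin 2) (Fin 2) ℝ) (θ φ : ℝ) :
    psiFun A θ φ * cos φ - psiFun A θ (φ + π / 2) * sin φ = A 0 0 * cos θ + A 1 0 * sin θ := by
  simpa only [psiFun_transpose, transpose_apply] using psiFun_mul_cos_sub_left Aᵀ φ θ

lemma psiFun_mul_sin_add_right (A : Matrix (Fin 2) (Fin 2) ℝ) (θ φ : ℝ) :
    psiFun A θ φ * sin φ + psiFun A θ (φ + π / 2) * cos φ = A 0 1 * cos θ + A 1 1 * sin θ := by
  simpa only [psiFun_transpose, transpose_apply] using psiFun_mul_sin_add_left Aᵀ φ θ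

lemma sin_pi_div_four_sub (r : ℝ) : sin (π / 4 - r) = cos (π / 4 + r) := by
  rw [← cos_pi_div_two_sub]; ring_nf

lemma cos_pi_div_four_sub (r : ℝ) : cos (π / 4 - r) = sin (π / 4 + r) := by
  rw [← sin_pi_div_two_sub]; ring_nf

lemma hasDerivAt_fermiPhi_theta (θ φ r : ℝ) :
    HasDerivAt (fun θ' => FermiPhi θ' φ r)
      ![sin (π / 4 + r) * -sin θ, sin (π / 4 + r) * cos θ, 0, 0] θ := by
  rw [hasDerivAt_pi]
  intro i
  fin_cases i
  · exact (hasDerivAt_cos θ).const_mul _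
  · exact (hasDerivAt_sin θ).const_mul _
  · exact hasDerivAt_const _ _
  · exact hasDerivAt_const _ _

lemma hasDerivAt_fermiPhi_phi (θ φ r : ℝ) :
    HasDerivAt (fun φ' => FermiPhi θ φ' r)
      ![0, 0, cos (π / 4 + r) * -sin φ, cos (π / 4 + r) * cos φ] φ := by
  rw [hasDerivAt_pi]
  intro i
  fin_cases i
  · exact hasDerivAt_const _ _
  · exact hasDerivAt_const _ _
  · simpa [FermiPhi, sin_pi_div_four_sub] using (hasDerivAt_cos φ).const_mul (cos (π / 4 + r))
  · simpa [FermiPhi, sin_pi_div_four_sub] using (hasDerivAt_sin φ).const_mul (cos (π / 4 + r))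

lemma hasDerivAt_fermiPhi_r (θ φ r : ℝ) :
    HasDerivAt (fun r' => FermiPhi θ φ r')
      ![cos (π / 4 + r) * cos θ, cos (π / 4 + r) * sin θ,
        -sin (π / 4 + r) * cos φ, -sin (π / 4 + r) * sin φ] r := by
  have hplus : HasDerivAt (fun r' => sin (π / 4 + r')) (cos (π / 4 + r)) r := by
    simpa using ((hasDerivAt_id r).const_add (π / 4)).sin
  have hminus : HasDerivAt (fun r' => sin (π / 4 - r')) (-sin (π / 4 + r)) r := by
    simpa [cos_pi_div_four_sub] using ((hasDerivAt_id r).const_sub (π / 4)).sin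
  rw [hasDerivAt_pi]
  intro i
  fin_cases i
  · exact hplus.mul_const _
  · exact hplus.mul_const _
  · exact hminus.mul_const _
  · exact hminus.mul_const _

lemma xiMat_mulVec_fermiPhi (A : Matrix (Fin 2) (Fin 2) ℝ) (θ φ r : ℝ) :
    xiMat A *ᵥ FermiPhi θ φ r =
      ![cos (π / 4 + r) * (A 0 0 * cos φ + A 0 1 * sin φ),
        cos (π / 4 + r) * (A 1 0 * cos φ + A 1 1 * sin φ),
        -sin (π / 4 + r) * (A 0 0 * cos θ + A 1 0 * sin θ),
        -sin (π / 4 + r) * (A 0 1 * cos θ + A 1 1 * sin θ)] := by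
  ext i
  fin_cases i <;>
    simp only [xiMat, FermiPhi, sin_pi_div_four_sub, mulVec, dotProduct, Fin.sum_univ_four,
      of_apply, cons_val', cons_val_fin_one, cons_val_zero, cons_val_one, cons_val, Fin.isValue, Fin.zero_eta,
      Fin.mk_one, Fin.reduceFinMk, zero_mul, zero_add, add_zero] <;>
    ring

theorem killing_field_fermi_formula (A : Matrix (Fin 2) (Fin 2) ℝ) (θ φ r : ℝ)
    (hr : r ∈ Set.Ioo (-(π/4)) (π/4)) :
    (xiMat A) *ᵥ FermiPhi θ φ r
      = (Real.cot (π/4 + r) * deriv (fun θ' => psiFun A θ' φ) θ)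
          • deriv (fun θ' => FermiPhi θ' φ r) θ
        - (Real.tan (π/4 + r) * deriv (fun φ' => psiFun A θ φ') φ)
          • deriv (fun φ' => FermiPhi θ φ' r) φ
        + psiFun A θ φ • deriv (fun r' => FermiPhi θ φ r') r := by
  obtain ⟨hr₁, hr₂⟩ := hr
  have hsin : sin (π / 4 + r) ≠ 0 :=
    (sin_pos_of_pos_of_lt_pi (by linarith [pi_pos]) (by linarith)).ne'
  have hcos : cos (π / 4 + r) ≠ 0 := (cos_pos_of_mem_Ioo ⟨by linarith, by linarith⟩).ne'
  have hcot : cot (π / 4 + r) * sin (π / 4 + r) = cos (π / 4 + r) := by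
    rw [cot_eq_cos_div_sin, div_mul_cancel₀ _ hsin]
  have htan : tan (π / 4 + r) * cos (π / 4 + r) = sin (π / 4 + r) := by
    rw [tan_eq_sin_div_cos, div_mul_cancel₀ _ hcos]
  rw [xiMat_mulVec_fermiPhi, (hasDerivAt_psiFun_left A θ φ).deriv,
    (hasDerivAt_psiFun_right A θ φ).deriv, (hasDerivAt_fermiPhi_theta θ φ r).deriv,
    (hasDerivAt_fermiPhi_phi θ φ r).deriv, (hasDerivAt_fermiPhi_r θ φ r).deriv]
  set s := sin (π / 4 + r)
  set c := cos (π / 4 + r)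
  set ψθ := psiFun A (θ + π / 2) φ
  set ψφ := psiFun A θ (φ + π / 2)
  simp only [smul_cons, smul_eq_mul, smul_empty, cons_sub_cons, cons_add_cons, empty_sub_empty,
    empty_add_empty, vecCons_inj, and_true]
  refine ⟨?_, ?_, ?_, ?_⟩
  · linear_combination (-c) * psiFun_mul_cos_sub_left A θ φ + ψθ * sin θ * hcot
  · linear_combination (-c) * psiFun_mul_sin_add_left A θ φ - ψθ * cos θ * hcot
  · linear_combination s * psiFun_mul_cos_sub_right A θ φ - ψφ * sin φ * htan
  · linear_combination s * psiFun_mul_sin_add_right A θ φ + ψφ * cos φ * htan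
end

section
/- For every 2×2 real matrix A there exist a diagonal matrix D and matrices M, N ∈ SO(2) such that A = M D N. If moreover A is not a scalar multiple of an orthogonal matrix, then there exist exactly four diagonal matrices D admitting such a factorization, and for each such D the pair (M,N) is unique up to simultaneous change of sign: if M D N = M' D N' with M, N, M', N' ∈ SO(2), then (M',N') = (M,N) or (M',N') = (−M,−N). -/
open Matrix

/-- Membership in `SO(2)`: a `2 × 2` rotation matrix. -/
def IsSO2 (M : Matrix (Fin 2) (Fin 2) ℝ) : Prop := M * Mᵀ = 1 ∧ M.det = 1

section Aux

lemma tr2 (a b c d : ℝ) : (!![a,b;c,d])ᵀ = !![a,c;b,d] := by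
  ext i j; fin_cases i <;> fin_cases j <;> rfl

lemma eta2 (M : Matrix (Fin 2) (Fin 2) ℝ) : M = !![M 0 0, M 0 1; M 1 0, M 1 1] := by
  ext i j; fin_cases i <;> fin_cases j <;> rfl

lemma ent2 {a b c d a' b' c' d' : ℝ} (h : !![a,b;c,d] = !![a',b';c',d']) :
    a = a' ∧ b = b' ∧ c = c' ∧ d = d' :=
  ⟨congrFun (congrFun h 0) 0, congrFun (congrFun h 0) 1,
   congrFun (congrFun h 1) 0, congrFun (congrFun h 1) 1⟩

lemma mk2 {a b c d a' b' c' d' : ℝ} (h1 : a = a') (h2 : b = b') (h3 : c = c') (h4 : d = d') :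
    !![a,b;c,d] = !![a',b';c',d'] := by rw [h1,h2,h3,h4]

lemma isDiag_d (x y : ℝ) : (!![x,0;0,y] : Matrix (Fin 2) (Fin 2) ℝ).IsDiag := by
  intro i j hij
  fin_cases i <;> fin_cases j <;> simp_all

lemma diag2 {D : Matrix (Fin 2) (Fin 2) ℝ} (h : D.IsDiag) : ∃ a b, D = !![a,0;0,b] := by
  refine ⟨D 0 0, D 1 1, ?_⟩
  ext i j
  fin_cases i <;> fin_cases j <;> first
    | rfl
    | exact h (by decide)

lemma neg2 (a b : ℝ) : (!![-a,0;0,-b] : Matrix (Fin 2) (Fin 2) ℝ) = -!![a,0;0,b] := by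
  ext i j; fin_cases i <;> fin_cases j <;> simp

lemma ddt (a b : ℝ) : (!![a,0;0,b] : Matrix (Fin 2) (Fin 2) ℝ) * (!![a,0;0,b])ᵀ = !![a^2,0;0,b^2] := by
  rw [tr2, Matrix.mul_fin_two]
  exact mk2 (by ring) (by ring) (by ring) (by ring)

lemma smul_one2 (k : ℝ) : k • (1 : Matrix (Fin 2) (Fin 2) ℝ) = !![k,0;0,k] := by
  ext i j; fin_cases i <;> fin_cases j <;> simp [Matrix.one_apply]

lemma negone2 : (!![-1,0;0,-1] : Matrix (Fin 2) (Fin 2) ℝ) = -1 := by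
  ext i j; fin_cases i <;> fin_cases j <;> simp [Matrix.one_apply]

end Aux

section SO2

lemma so2_rot {c s : ℝ} (h : c^2+s^2 = 1) : IsSO2 !![c,-s;s,c] := by
  constructor
  · rw [tr2, Matrix.mul_fin_two, Matrix.one_fin_two]
    exact mk2 (by nlinarith) (by ring) (by ring) (by nlinarith)
  · rw [Matrix.det_fin_two_of]; nlinarith [h]

lemma so2_exists {M} (h : IsSO2 M) : ∃ c s : ℝ, c^2+s^2=1 ∧ M = !![c,-s;s,c] := by
  obtain ⟨h1, h2⟩ := h
  set a := M 0 0; set b := M 0 1; set c := M 1 0; set d := M 1 1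
  have hM : M = !![a,b;c,d] := eta2 M
  rw [hM, tr2, Matrix.mul_fin_two, Matrix.one_fin_two] at h1
  rw [hM, Matrix.det_fin_two_of] at h2
  obtain ⟨e1, e2, e3, e4⟩ := ent2 h1
  refine ⟨a, -b, by nlinarith, ?_⟩
  rw [hM]
  have hc : c = -b := by linear_combination a*e2 - b*h2 - c*e1
  have hd : d = a := by linear_combination a*h2 + b*e2 - d*e1
  rw [hc, hd]; ring_nf

lemma so2_mul {M N} (hM : IsSO2 M) (hN : IsSO2 N) : IsSO2 (M * N) := by
  refine ⟨?_, by rw [Matrix.det_mul, hM.2, hN.2, one_mul]⟩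
  rw [Matrix.transpose_mul, Matrix.mul_assoc, ← Matrix.mul_assoc N, hN.1, Matrix.one_mul, hM.1]

lemma so2_transpose {M} (hM : IsSO2 M) : IsSO2 Mᵀ := by
  refine ⟨?_, by rw [Matrix.det_transpose, hM.2]⟩
  rw [Matrix.transpose_transpose]
  exact mul_eq_one_comm.mp hM.1

lemma so2_neg {M} (hM : IsSO2 M) : IsSO2 (-M) :=
  ⟨by simp [hM.1], by simp [Matrix.det_neg, hM.2]⟩

lemma so2_W : IsSO2 !![(0:ℝ),-1;1,0] := so2_rot (c := 0) (s := 1) (by norm_num)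

lemma so2_W' : IsSO2 !![(0:ℝ),1;-1,0] := by
  have h := so2_rot (c := 0) (s := -1) (by norm_num)
  norm_num at h
  exact h

end SO2

section Exist

lemma unitize (p q : ℝ) : ∃ ρ u1 u2 : ℝ, u1^2+u2^2 = 1 ∧ ρ*u1 = p ∧ ρ*u2 = q := by
  by_cases h : p^2 + q^2 = 0
  · exact ⟨0, 1, 0, by norm_num, by nlinarith [sq_nonneg p, sq_nonneg q],
      by nlinarith [sq_nonneg p, sq_nonneg q]⟩
  · have hpos : 0 < p^2 + q^2 := lt_of_le_of_ne (by positivity) (Ne.symm h)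
    set ρ := Real.sqrt (p^2+q^2) with hρ
    have hρpos : 0 < ρ := Real.sqrt_pos.mpr hpos
    have hρsq : ρ^2 = p^2+q^2 := Real.sq_sqrt hpos.le
    refine ⟨ρ, p/ρ, q/ρ, ?_, ?_, ?_⟩
    · field_simp; linarith [hρsq]
    · field_simp
    · field_simp

lemma sqrt_unit (w1 w2 : ℝ) (h : w1^2+w2^2 = 1) :
    ∃ m1 m2 : ℝ, m1^2+m2^2 = 1 ∧ m1^2-m2^2 = w1 ∧ 2*(m1*m2) = w2 := by
  have h1 : 0 ≤ (1+w1)/2 := by nlinarith [sq_nonneg w2]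
  have h2 : 0 ≤ (1-w1)/2 := by nlinarith [sq_nonneg w2]
  set m1 := Real.sqrt ((1+w1)/2) with hm1
  set e : ℝ := if 0 ≤ w2 then 1 else -1 with he
  set m2 := e * Real.sqrt ((1-w1)/2) with hm2
  have hs1 : m1^2 = (1+w1)/2 := Real.sq_sqrt h1
  have he2 : e^2 = 1 := by rw [he]; split <;> norm_num
  have hs2 : m2^2 = (1-w1)/2 := by rw [hm2, mul_pow, he2, one_mul]; exact Real.sq_sqrt h2
  refine ⟨m1, m2, by linarith, by linarith, ?_⟩
  have hprod : Real.sqrt ((1+w1)/2) * Real.sqrt ((1-w1)/2) = |w2|/2 := by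
    rw [← Real.sqrt_mul h1]
    have : (1+w1)/2 * ((1-w1)/2) = (w2/2)^2 := by nlinarith
    rw [this, Real.sqrt_sq_eq_abs, abs_div]
    norm_num
  rw [hm2, hm1]
  rw [show 2*(Real.sqrt ((1+w1)/2) * (e * Real.sqrt ((1-w1)/2))) =
      e * (2 * (Real.sqrt ((1+w1)/2) * Real.sqrt ((1-w1)/2))) by ring, hprod]
  rw [he]; split <;> rename_i hw
  · rw [abs_of_nonneg hw]; ring
  · rw [abs_of_neg (not_le.mp hw)]; ring

lemma exists_svd (A : Matrix (Fin 2) (Fin 2) ℝ) :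
    ∃ D M N : Matrix (Fin 2) (Fin 2) ℝ, D.IsDiag ∧ IsSO2 M ∧ IsSO2 N ∧ A = M * D * N := by
  obtain ⟨ρ, u1, u2, hu, hp, hq⟩ := unitize ((A 0 0 + A 1 1)/2) ((A 1 0 - A 0 1)/2)
  obtain ⟨σ, v1, v2, hv, hr, hs⟩ := unitize ((A 0 0 - A 1 1)/2) ((A 0 1 + A 1 0)/2)
  have hw : (u1*v1 - u2*v2)^2 + (u1*v2 + u2*v1)^2 = 1 := by
    linear_combination (v1^2+v2^2)*hu + hv
  obtain ⟨m1, m2, hm, hw1, hw2⟩ := sqrt_unit _ _ hw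
  set n1 := m1*u1 + m2*u2 with hn1
  set n2 := m1*u2 - m2*u1 with hn2
  have hn : n1^2 + n2^2 = 1 := by rw [hn1, hn2]; linear_combination (u1^2+u2^2)*hm + hu
  refine ⟨!![ρ+σ, 0; 0, ρ-σ], !![m1,-m2;m2,m1], !![n1,-n2;n2,n1],
    isDiag_d _ _, so2_rot hm, so2_rot hn, ?_⟩
  have hmn1 : m1*n1 - m2*n2 = u1 := by rw [hn1, hn2]; linear_combination u1*hm
  have hmn2 : m2*n1 + m1*n2 = u2 := by rw [hn1, hn2]; linear_combination u2*hm
  have hmc1 : m1*n1 + m2*n2 = v1 := by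
    rw [hn1, hn2]; linear_combination u1*hw1 + u2*hw2 + v1*hu
  have hmc2 : m2*n1 - m1*n2 = v2 := by
    rw [hn1, hn2]; linear_combination u1*hw2 - u2*hw1 + v2*hu
  rw [Matrix.mul_fin_two, Matrix.mul_fin_two]
  rw [eta2 A]
  refine mk2 ?_ ?_ ?_ ?_
  · linear_combination -ρ*hmn1 - σ*hmc1 - hp - hr
  · linear_combination ρ*hmn2 - σ*hmc2 + hq - hs
  · linear_combination -ρ*hmn2 - σ*hmc2 - hq - hs
  · linear_combination -ρ*hmn1 + σ*hmc1 - hp + hr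

end Exist

section Conj

lemma AAt {A M D N : Matrix (Fin 2) (Fin 2) ℝ} (h : A = M*D*N) (hN : N*Nᵀ = 1) :
    A*Aᵀ = M*(D*Dᵀ)*Mᵀ := by
  subst h
  simp only [Matrix.transpose_mul, Matrix.mul_assoc]
  congr 2
  rw [← Matrix.mul_assoc N, hN, Matrix.one_mul]

lemma conj_eq {M M0 X Y : Matrix (Fin 2) (Fin 2) ℝ} (hM0 : M0 * M0ᵀ = 1)
    (h : M*X*Mᵀ = M0*Y*M0ᵀ) : (M0ᵀ*M)*X*(M0ᵀ*M)ᵀ = Y := by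
  have h0 : M0ᵀ * M0 = 1 := mul_eq_one_comm.mp hM0
  have h1 : M0ᵀ * (M*X*Mᵀ) * M0 = M0ᵀ*(M0*Y*M0ᵀ)*M0 := by rw [h]
  simp only [Matrix.mul_assoc] at h1
  rw [← Matrix.mul_assoc M0ᵀ M0, h0, Matrix.one_mul, mul_one] at h1
  simp only [Matrix.transpose_mul, Matrix.transpose_transpose, Matrix.mul_assoc]
  exact h1

lemma exchange {M N M' N' D : Matrix (Fin 2) (Fin 2) ℝ} (hM' : M' * M'ᵀ = 1) (hN : N * Nᵀ = 1)
    (h : M*D*N = M'*D*N') : (M'ᵀ*M)*D = D*(N'*Nᵀ) := by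
  have hM'2 : M'ᵀ * M' = 1 := mul_eq_one_comm.mp hM'
  have h1 : M'ᵀ * (M*D*N) * Nᵀ = M'ᵀ*(M'*D*N')*Nᵀ := by rw [h]
  simp only [Matrix.mul_assoc] at h1
  rw [hN, mul_one, ← Matrix.mul_assoc M'ᵀ M', hM'2, Matrix.one_mul] at h1
  simp only [Matrix.mul_assoc]
  exact h1

lemma scalar_out {A M : Matrix (Fin 2) (Fin 2) ℝ} (hM : M*Mᵀ = 1) {k : ℝ}
    (h : A*Aᵀ = M * !![k,0;0,k] * Mᵀ) : A*Aᵀ = k • 1 := by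
  rw [h, ← smul_one2, Matrix.mul_smul, Matrix.mul_one, Matrix.smul_mul, hM]

lemma swap_conj (M0 N0 : Matrix (Fin 2) (Fin 2) ℝ) (α β : ℝ) :
    (M0 * !![0,1;-1,0]) * !![β,0;0,α] * (!![0,-1;1,0] * N0) = M0 * !![α,0;0,β] * N0 := by
  ext i j
  fin_cases i <;> fin_cases j <;>
    simp [Matrix.mul_apply, Matrix.vecMul, dotProduct, Fin.sum_univ_two] <;> ring

end Conj

lemma pair_cases {e1 e2 α β : ℝ} (h1 : e1^2 = α^2) (h2 : e2^2 = β^2) (h3 : e1*e2 = α*β) :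
    (e1 = α ∧ e2 = β) ∨ (e1 = -α ∧ e2 = -β) := by
  have q1 : (e1-α)*(e1+α) = 0 := by linear_combination h1
  have q2 : (e2-β)*(e2+β) = 0 := by linear_combination h2
  rcases mul_eq_zero.mp q1 with ha | ha <;> rcases mul_eq_zero.mp q2 with hb | hb
  · exact Or.inl ⟨by linarith, by linarith⟩
  · have he1 : e1 = α := by linarith
    have he2 : e2 = -β := by linarith
    rw [he1, he2] at h3
    have hab : α*β = 0 := by linarith
    rcases mul_eq_zero.mp hab with h | h
    · exact Or.inr ⟨by rw [he1, h]; ring, he2⟩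
    · exact Or.inl ⟨he1, by rw [he2, h]; ring⟩
  · have he1 : e1 = -α := by linarith
    have he2 : e2 = β := by linarith
    rw [he1, he2] at h3
    have hab : α*β = 0 := by linarith
    rcases mul_eq_zero.mp hab with h | h
    · exact Or.inl ⟨by rw [he1, h]; ring, he2⟩
    · exact Or.inr ⟨he1, by rw [he2, h]; ring⟩
  · exact Or.inr ⟨by linarith, by linarith⟩

lemma key_sq {A M N M0 N0 : Matrix (Fin 2) (Fin 2) ℝ} {e1 e2 α β : ℝ}
    (hM : IsSO2 M) (hN : IsSO2 N) (hM0 : IsSO2 M0) (hN0 : IsSO2 N0)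
    (hA : A = M * !![e1,0;0,e2] * N) (hA0 : A = M0 * !![α,0;0,β] * N0) :
    e1*e2 = α*β ∧ (α^2 = β^2 ∨ (e1^2 = α^2 ∧ e2^2 = β^2) ∨ (e1^2 = β^2 ∧ e2^2 = α^2)) := by
  constructor
  · have d1 : A.det = e1*e2 := by
      rw [hA, Matrix.det_mul, Matrix.det_mul, hM.2, hN.2, Matrix.det_fin_two_of]; ring
    have d2 : A.det = α*β := by
      rw [hA0, Matrix.det_mul, Matrix.det_mul, hM0.2, hN0.2, Matrix.det_fin_two_of]; ring
    rw [← d1, d2]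
  · have g1 : A*Aᵀ = M * !![e1^2,0;0,e2^2] * Mᵀ := by rw [AAt hA hN.1, ddt]
    have g2 : A*Aᵀ = M0 * !![α^2,0;0,β^2] * M0ᵀ := by rw [AAt hA0 hN0.1, ddt]
    have hc := conj_eq hM0.1 (g1.symm.trans g2)
    obtain ⟨c, s, hcs, hRr⟩ := so2_exists (so2_mul (so2_transpose hM0) hM)
    rw [hRr, tr2, Matrix.mul_fin_two, Matrix.mul_fin_two] at hc
    obtain ⟨E00, E01, E10, E11⟩ := ent2 hc
    have hE0 : c^2*e1^2 + s^2*e2^2 = α^2 := by linear_combination E00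
    have hE1 : s^2*e1^2 + c^2*e2^2 = β^2 := by linear_combination E11
    have hE2 : (c*s)*(e1^2-e2^2) = 0 := by linear_combination E01
    by_cases he : e1^2 = e2^2
    · left; linear_combination -hE0 + hE1 + (c^2-s^2)*he
    · have hcs0 : c*s = 0 := (mul_eq_zero.mp hE2).resolve_right (sub_ne_zero_of_ne he)
      rcases mul_eq_zero.mp hcs0 with h' | h'
      · right; right
        have hs2 : s^2 = 1 := by linear_combination hcs - c*h'
        exact ⟨by linear_combination hE1 - e1^2*hs2 - (c*e2^2)*h',
               by linear_combination hE0 - e2^2*hs2 - (c*e1^2)*h'⟩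
      · right; left
        have hc2 : c^2 = 1 := by linear_combination hcs - s*h'
        exact ⟨by linear_combination hE0 - e1^2*hc2 - (s*e2^2)*h',
               by linear_combination hE1 - e2^2*hc2 - (s*e1^2)*h'⟩

theorem singular_value_decomposition_two_by_two (A : Matrix (Fin 2) (Fin 2) ℝ) :
    (∃ (D M N : Matrix (Fin 2) (Fin 2) ℝ),
      D.IsDiag ∧ IsSO2 M ∧ IsSO2 N ∧ A = M * D * N) ∧
    (¬(∃ c : ℝ, A * Aᵀ = c • 1) →
      ({D : Matrix (Fin 2) (Fin 2) ℝ |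
          D.IsDiag ∧ ∃ M N, IsSO2 M ∧ IsSO2 N ∧ A = M * D * N}.ncard = 4 ∧
       ∀ D M N M' N' : Matrix (Fin 2) (Fin 2) ℝ,
          D.IsDiag → IsSO2 M → IsSO2 N → IsSO2 M' → IsSO2 N' →
          A = M * D * N → A = M' * D * N' →
          (M' = M ∧ N' = N) ∨ (M' = -M ∧ N' = -N))) := by
  refine ⟨exists_svd A, fun hns => ⟨?_, ?_⟩⟩
  · -- the count
    obtain ⟨D0, M0, N0, hd0, hM0, hN0, hA0⟩ := exists_svd A
    obtain ⟨α, β, hD0⟩ := diag2 hd0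
    subst hD0
    have hne : α^2 ≠ β^2 := by
      intro h
      apply hns
      refine ⟨α^2, scalar_out hM0.1 ?_⟩
      have hAA : A*Aᵀ = M0 * !![α^2,0;0,β^2] * M0ᵀ := by rw [AAt hA0 hN0.1, ddt]
      rw [← h] at hAA
      exact hAA
    have hSet : {D : Matrix (Fin 2) (Fin 2) ℝ |
        D.IsDiag ∧ ∃ M N, IsSO2 M ∧ IsSO2 N ∧ A = M * D * N} =
        {!![α,0;0,β], !![-α,0;0,-β], !![β,0;0,α], !![-β,0;0,-α]} := by
      ext D
      simp only [Set.mem_setOf_eq, Set.mem_insert_iff, Set.mem_singleton_iff]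
      constructor
      · rintro ⟨hdg, M, N, hM, hN, hA'⟩
        obtain ⟨e1, e2, hDe⟩ := diag2 hdg
        subst hDe
        obtain ⟨hdet, hsq⟩ := key_sq hM hN hM0 hN0 hA' hA0
        rcases hsq with h | ⟨h1, h2⟩ | ⟨h1, h2⟩
        · exact absurd h hne
        · rcases pair_cases h1 h2 hdet with ⟨x, y⟩ | ⟨x, y⟩
          · exact Or.inl (by rw [x, y])
          · exact Or.inr (Or.inl (by rw [x, y]))
        · rcases pair_cases h1 h2 (by linarith : e1*e2 = β*α) with ⟨x, y⟩ | ⟨x, y⟩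
          · exact Or.inr (Or.inr (Or.inl (by rw [x, y])))
          · exact Or.inr (Or.inr (Or.inr (by rw [x, y])))
      · intro h
        rcases h with h | h | h | h <;> subst h
        · exact ⟨isDiag_d _ _, M0, N0, hM0, hN0, hA0⟩
        · refine ⟨isDiag_d _ _, -M0, N0, so2_neg hM0, hN0, ?_⟩
          rw [hA0, neg2, neg_mul_neg]
        · refine ⟨isDiag_d _ _, M0 * !![0,1;-1,0], !![0,-1;1,0] * N0,
            so2_mul hM0 so2_W', so2_mul so2_W hN0, ?_⟩
          rw [hA0]; exact (swap_conj M0 N0 α β).symm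
        · refine ⟨isDiag_d _ _, -(M0 * !![0,1;-1,0]), !![0,-1;1,0] * N0,
            so2_neg (so2_mul hM0 so2_W'), so2_mul so2_W hN0, ?_⟩
          rw [hA0, neg2, neg_mul_neg]
          exact (swap_conj M0 N0 α β).symm
    rw [hSet]
    have d12 : (!![α,0;0,β] : Matrix (Fin 2) (Fin 2) ℝ) ≠ !![-α,0;0,-β] := by
      intro h; obtain ⟨x, -, -, y⟩ := ent2 h
      exact hne (by rw [show α = 0 by linarith, show β = 0 by linarith])
    have d13 : (!![α,0;0,β] : Matrix (Fin 2) (Fin 2) ℝ) ≠ !![β,0;0,α] := by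
      intro h; obtain ⟨x, -, -, -⟩ := ent2 h
      exact hne (by rw [x])
    have d14 : (!![α,0;0,β] : Matrix (Fin 2) (Fin 2) ℝ) ≠ !![-β,0;0,-α] := by
      intro h; obtain ⟨x, -, -, -⟩ := ent2 h
      exact hne (by rw [x]; ring)
    have d23 : (!![-α,0;0,-β] : Matrix (Fin 2) (Fin 2) ℝ) ≠ !![β,0;0,α] := by
      intro h; obtain ⟨x, -, -, -⟩ := ent2 h
      exact hne (by rw [show α = -β by linarith]; ring)
    have d24 : (!![-α,0;0,-β] : Matrix (Fin 2) (Fin 2) ℝ) ≠ !![-β,0;0,-α] := by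
      intro h; obtain ⟨x, -, -, -⟩ := ent2 h
      exact hne (by rw [show α = β by linarith])
    have d34 : (!![β,0;0,α] : Matrix (Fin 2) (Fin 2) ℝ) ≠ !![-β,0;0,-α] := by
      intro h; obtain ⟨x, -, -, y⟩ := ent2 h
      exact hne (by rw [show α = 0 by linarith, show β = 0 by linarith])
    rw [Set.ncard_insert_of_notMem (by simp [d12, d13, d14]),
        Set.ncard_insert_of_notMem (by simp [d23, d24]),
        Set.ncard_insert_of_notMem (by simp [d34]),
        Set.ncard_singleton]
  · -- uniqueness
    intro D M N M' N' hdg hM hN hM' hN' h1 h2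
    obtain ⟨e1, e2, hDe⟩ := diag2 hdg
    subst hDe
    have hne2 : e1^2 ≠ e2^2 := by
      intro h
      apply hns
      refine ⟨e1^2, scalar_out hM.1 ?_⟩
      have hAA : A*Aᵀ = M * !![e1^2,0;0,e2^2] * Mᵀ := by rw [AAt h1 hN.1, ddt]
      rw [← h] at hAA
      exact hAA
    have hex := exchange hM'.1 hN.1 (h1.symm.trans h2)
    obtain ⟨c, s, hcs, hR⟩ := so2_exists (so2_mul (so2_transpose hM') hM)
    obtain ⟨c', s', hcs', hS⟩ := so2_exists (so2_mul hN' (so2_transpose hN))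
    rw [hR, hS, Matrix.mul_fin_two, Matrix.mul_fin_two] at hex
    obtain ⟨F1, F2, F3, F4⟩ := ent2 hex
    have hs0 : s = 0 := by
      have h5 : s*(e1^2 - e2^2) = 0 := by linear_combination e1*F3 + e2*F2
      exact (mul_eq_zero.mp h5).resolve_right (sub_ne_zero_of_ne hne2)
    have hs0' : s' = 0 := by
      have h5 : s'*(e1^2 - e2^2) = 0 := by linear_combination e1*F2 + e2*F3
      exact (mul_eq_zero.mp h5).resolve_right (sub_ne_zero_of_ne hne2)
    have hcc : c' = c := by
      have h5 : e1*(c - c') = 0 := by linear_combination F1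
      have h6 : e2*(c - c') = 0 := by linear_combination F4
      by_cases hz : e1 = 0
      · have hz2 : e2 ≠ 0 := fun hz2 => hne2 (by rw [hz, hz2])
        have := (mul_eq_zero.mp h6).resolve_left hz2
        linarith
      · have := (mul_eq_zero.mp h5).resolve_left hz
        linarith
    rw [hs0] at hR
    rw [hs0', hcc] at hS
    norm_num at hR hS
    have hc1 : c = 1 ∨ c = -1 := by
      have hq : (c-1)*(c+1) = 0 := by linear_combination hcs - s*hs0
      rcases mul_eq_zero.mp hq with h | h
      · exact Or.inl (by linarith)
      · exact Or.inr (by linarith)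
    have hNtN : Nᵀ * N = 1 := mul_eq_one_comm.mp hN.1
    rcases hc1 with h | h <;> rw [h] at hR hS
    · left
      have hR1 : M'ᵀ*M = 1 := by rw [hR, ← Matrix.one_fin_two]
      have hS1 : N'*Nᵀ = 1 := by rw [hS, ← Matrix.one_fin_two]
      constructor
      · have := congrArg (M' * ·) hR1
        simp only [← Matrix.mul_assoc, hM'.1, Matrix.one_mul, Matrix.mul_one] at this
        exact this.symm
      · have := congrArg (· * N) hS1
        simp only [Matrix.mul_assoc, hNtN, Matrix.one_mul, Matrix.mul_one] at this
        exact this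
    · right
      have hR1 : M'ᵀ*M = -1 := by rw [hR, negone2]
      have hS1 : N'*Nᵀ = -1 := by rw [hS, negone2]
      constructor
      · have := congrArg (M' * ·) hR1
        simp only [← Matrix.mul_assoc, hM'.1, Matrix.one_mul, Matrix.mul_neg,
          Matrix.mul_one] at this
        rw [this, neg_neg]
      · have := congrArg (· * N) hS1
        simp only [Matrix.mul_assoc, hNtN, Matrix.mul_one, Matrix.neg_mul,
          Matrix.one_mul] at this
        exact this
end

section
/- Let A be a 2×2 real matrix, let ε > 0, and let α : (−ε,ε) × ℝ² → ℝ² and h : (−ε,ε) × ℝ² → (−π/4, π/4) be smooth maps with α(0,θ,φ) = (θ,φ) and h(0,θ,φ) = 0, such that for all t ∈ (−ε,ε) and all (θ,φ) ∈ ℝ², exp(t ξ_A)·Φ(θ,φ,0) = Φ(α(t,θ,φ), h(t,θ,φ)), where exp denotes the matrix exponential acting on ℝ⁴. Then, at every (θ,φ): ∂h/∂t|_{t=0} = ψ_A(θ,φ); ∂α/∂t|_{t=0} = ((∂ψ_A/∂θ)(θ,φ), −(∂ψ_A/∂φ)(θ,φ)); and ∂²h/∂t²|_{t=0} = ((∂ψ_A/∂θ)(θ,φ))²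 − ((∂ψ_A/∂φ)(θ,φ))². -/
open Real Matrix

section auxiliary

attribute [local instance] Matrix.linftyOpNormedRing Matrix.linftyOpNormedAlgebra

/-- The continuous linear map `B ↦ (B *ᵥ w) i` on `4 × 4` matrices. -/
noncomputable def mvCLM (w : Fin 4 → ℝ) (i : Fin 4) : Matrix (Fin 4) (Fin 4) ℝ →L[ℝ] ℝ :=
  LinearMap.toContinuousLinearMap
  { toFun := fun B => (B *ᵥ w) i
    map_add' := by intro B C; simp [Matrix.add_mulVec]
    map_smul' := by intro c B; simp [Matrix.smul_mulVec] }

lemma expMulVec_hasDerivAt (M : Matrix (Fin 4) (Fin 4) ℝ) (w : Fin 4 → ℝ) (i : Fin 4) (t : ℝ) :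
    HasDerivAt (fun s => (NormedSpace.exp (s • M) *ᵥ w) i)
      ((NormedSpace.exp (t • M) *ᵥ (M *ᵥ w)) i) t := by
  have h1 := hasDerivAt_exp_smul_const (𝕂 := ℝ) M t
  have h2 := ((mvCLM w i).hasFDerivAt.comp_hasDerivAt t h1)
  rw [Matrix.mulVec_mulVec]; exact h2

end auxiliary

lemma expMulVec_hasDerivAt_zero (M : Matrix (Fin 4) (Fin 4) ℝ) (w : Fin 4 → ℝ) (i : Fin 4) :
    HasDerivAt (fun s => (NormedSpace.exp (s • M) *ᵥ w) i) ((M *ᵥ w) i) (0:ℝ) := by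
  have := expMulVec_hasDerivAt M w i 0
  simpa [NormedSpace.exp_zero] using this

theorem derivatives_of_killing_flow (A : Matrix (Fin 2) (Fin 2) ℝ) (ε : ℝ) (hε : 0 < ε)
    (α : ℝ × ℝ × ℝ → ℝ × ℝ) (h : ℝ × ℝ × ℝ → ℝ)
    (hα_smooth : ContDiffOn ℝ (⊤ : ℕ∞) α (Set.Ioo (-ε) ε ×ˢ (Set.univ : Set (ℝ × ℝ))))
    (hh_smooth : ContDiffOn ℝ (⊤ : ℕ∞) h (Set.Ioo (-ε) ε ×ˢ (Set.univ : Set (ℝ × ℝ))))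
    (hh_range : ∀ t ∈ Set.Ioo (-ε) ε, ∀ θ φ : ℝ,
      h (t, θ, φ) ∈ Set.Ioo (-(π/4)) (π/4))
    (hα0 : ∀ θ φ : ℝ, α (0, θ, φ) = (θ, φ))
    (hh0 : ∀ θ φ : ℝ, h (0, θ, φ) = 0)
    (hflow : ∀ t ∈ Set.Ioo (-ε) ε, ∀ θ φ : ℝ,
      (NormedSpace.exp (t • xiMat A)) *ᵥ FermiPhi θ φ 0
        = FermiPhi (α (t, θ, φ)).1 (α (t, θ, φ)).2 (h (t, θ, φ))) :
    ∀ θ φ : ℝ,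
      deriv (fun t => h (t, θ, φ)) 0 = psiFun A θ φ ∧
      deriv (fun t => α (t, θ, φ)) 0
        = (deriv (fun θ' => psiFun A θ' φ) θ, -(deriv (fun φ' => psiFun A θ φ') φ)) ∧
      deriv (deriv (fun t => h (t, θ, φ))) 0
        = (deriv (fun θ' => psiFun A θ' φ) θ) ^ 2
          - (deriv (fun φ' => psiFun A θ φ') φ) ^ 2 := by
  intro θ φ
  have h0mem : (0:ℝ) ∈ Set.Ioo (-ε) ε := ⟨by linarith, hε⟩
  set M := xiMat A with hM
  set v := FermiPhi θ φ 0 with hv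
  set H := fun t : ℝ => h (t, θ, φ) with hH
  set a := fun t : ℝ => (α (t, θ, φ)).1 with ha
  set b := fun t : ℝ => (α (t, θ, φ)).2 with hb
  set X := fun t : ℝ => NormedSpace.exp (t • M) *ᵥ v with hXdef
  set Y := fun t : ℝ => NormedSpace.exp (t • M) *ᵥ (M *ᵥ v) with hYdef
  -- basic values
  have Ha0 : H 0 = 0 := hh0 θ φ
  have Haa0 : a 0 = θ := by simp [ha, hα0]
  have Hbb0 : b 0 = φ := by simp [hb, hα0]
  -- smoothness of the slices
  have hcurve : ContDiff ℝ (⊤ : ℕ∞) (fun t : ℝ => (t, θ, φ)) :=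
    contDiff_id.prodMk (contDiff_const.prodMk contDiff_const)
  have hmaps : ∀ t ∈ Set.Ioo (-ε) ε,
      (t, θ, φ) ∈ Set.Ioo (-ε) ε ×ˢ (Set.univ : Set (ℝ × ℝ)) :=
    fun t ht => Set.mk_mem_prod ht (Set.mem_univ _)
  have hHsm : ContDiffOn ℝ (⊤ : ℕ∞) H (Set.Ioo (-ε) ε) := hh_smooth.comp hcurve.contDiffOn hmaps
  have hαsm : ContDiffOn ℝ (⊤ : ℕ∞) (fun t => α (t, θ, φ)) (Set.Ioo (-ε) ε) :=
    hα_smooth.comp hcurve.contDiffOn hmaps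
  have hasm : ContDiffOn ℝ (⊤ : ℕ∞) a (Set.Ioo (-ε) ε) := contDiff_fst.comp_contDiffOn hαsm
  have hbsm : ContDiffOn ℝ (⊤ : ℕ∞) b (Set.Ioo (-ε) ε) := contDiff_snd.comp_contDiffOn hαsm
  have hHdiff : ∀ t ∈ Set.Ioo (-ε) ε, DifferentiableAt ℝ H t := fun t ht =>
    (hHsm.differentiableOn (by simp)).differentiableAt (isOpen_Ioo.mem_nhds ht)
  have hH'sm : ContDiffOn ℝ (⊤ : ℕ∞) (deriv H) (Set.Ioo (-ε) ε) :=
    hHsm.deriv_of_isOpen isOpen_Ioo (by simp)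
  have hH'd0 : HasDerivAt (deriv H) (deriv (deriv H) 0) 0 :=
    ((hH'sm.differentiableOn (by simp)).differentiableAt (isOpen_Ioo.mem_nhds h0mem)).hasDerivAt
  have hH0d : HasDerivAt H (deriv H 0) 0 := (hHdiff 0 h0mem).hasDerivAt
  have haD : HasDerivAt a (deriv a 0) 0 :=
    ((hasm.differentiableOn (by simp)).differentiableAt (isOpen_Ioo.mem_nhds h0mem)).hasDerivAt
  have hbD : HasDerivAt b (deriv b 0) 0 :=
    ((hbsm.differentiableOn (by simp)).differentiableAt (isOpen_Ioo.mem_nhds h0mem)).hasDerivAt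
  -- derivatives of X
  have hXd : ∀ (i : Fin 4) (t : ℝ), HasDerivAt (fun s => X s i) (Y t i) t :=
    fun i t => expMulVec_hasDerivAt M v i t
  have hXd0 : ∀ i : Fin 4, HasDerivAt (fun s => X s i) ((M *ᵥ v) i) 0 :=
    fun i => expMulVec_hasDerivAt_zero M v i
  have hYd0 : ∀ i : Fin 4, HasDerivAt (fun s => Y s i) ((M *ᵥ (M *ᵥ v)) i) 0 :=
    fun i => expMulVec_hasDerivAt_zero M (M *ᵥ v) i
  have hX0 : ∀ i : Fin 4, X 0 i = v i := by
    intro i; simp [hXdef, NormedSpace.exp_zero]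
  -- component identities from the flow
  have ecomp : ∀ t ∈ Set.Ioo (-ε) ε, ∀ i : Fin 4,
      X t i = FermiPhi (a t) (b t) (H t) i := by
    intro t ht i
    have := congrFun (hflow t ht θ φ) i
    exact this
  have e0 : ∀ t ∈ Set.Ioo (-ε) ε, X t 0 = Real.sin (π/4 + H t) * Real.cos (a t) := by
    intro t ht; simpa [FermiPhi] using ecomp t ht 0
  have e1 : ∀ t ∈ Set.Ioo (-ε) ε, X t 1 = Real.sin (π/4 + H t) * Real.sin (a t) := by
    intro t ht; simpa [FermiPhi] using ecomp t ht 1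
  have e2 : ∀ t ∈ Set.Ioo (-ε) ε, X t 2 = Real.sin (π/4 - H t) * Real.cos (b t) := by
    intro t ht; simpa [FermiPhi, Matrix.vecHead, Matrix.vecTail] using ecomp t ht 2
  have e3 : ∀ t ∈ Set.Ioo (-ε) ε, X t 3 = Real.sin (π/4 - H t) * Real.sin (b t) := by
    intro t ht; simpa [FermiPhi, Matrix.vecHead, Matrix.vecTail] using ecomp t ht 3
  -- explicit component values
  have hsne : Real.sin (π/4) ≠ 0 := by rw [Real.sin_pi_div_four]; positivity
  have hs2 : Real.sin (π/4) ^ 2 = 1/2 := by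
    rw [Real.sin_pi_div_four, div_pow, Real.sq_sqrt] <;> norm_num
  have hv0 : v 0 = Real.sin (π/4) * Real.cos θ := by simp [hv, FermiPhi]
  have hv1 : v 1 = Real.sin (π/4) * Real.sin θ := by simp [hv, FermiPhi]
  have hMv0 : (M *ᵥ v) 0 = Real.sin (π/4) * (A 0 0 * Real.cos φ + A 0 1 * Real.sin φ) := by
    simp [hM, hv, xiMat, FermiPhi, Matrix.mulVec, dotProduct, Fin.sum_univ_four,
      Matrix.vecHead, Matrix.vecTail]
    ring
  have hMv1 : (M *ᵥ v) 1 = Real.sin (π/4) * (A 1 0 * Real.cos φ + A 1 1 * Real.sin φ) := by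
    simp [hM, hv, xiMat, FermiPhi, Matrix.mulVec, dotProduct, Fin.sum_univ_four,
      Matrix.vecHead, Matrix.vecTail]
    ring
  have hMv2 : (M *ᵥ v) 2 = -(Real.sin (π/4) * (A 0 0 * Real.cos θ + A 1 0 * Real.sin θ)) := by
    simp [hM, hv, xiMat, FermiPhi, Matrix.mulVec, dotProduct, Fin.sum_univ_four,
      Matrix.vecHead, Matrix.vecTail]
    ring
  have hMv3 : (M *ᵥ v) 3 = -(Real.sin (π/4) * (A 0 1 * Real.cos θ + A 1 1 * Real.sin θ)) := by
    simp [hM, hv, xiMat, FermiPhi, Matrix.mulVec, dotProduct, Fin.sum_univ_four,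
      Matrix.vecHead, Matrix.vecTail]
    ring
  have hZ0 : (M *ᵥ (M *ᵥ v)) 0
      = -(Real.sin (π/4) * (A 0 0 * (A 0 0 * Real.cos θ + A 1 0 * Real.sin θ)
          + A 0 1 * (A 0 1 * Real.cos θ + A 1 1 * Real.sin θ))) := by
    simp [hM, hv, xiMat, FermiPhi, Matrix.mulVec, dotProduct, Fin.sum_univ_four,
      Matrix.vecHead, Matrix.vecTail]
    ring
  have hZ1 : (M *ᵥ (M *ᵥ v)) 1
      = -(Real.sin (π/4) * (A 1 0 * (A 0 0 * Real.cos θ + A 1 0 * Real.sin θ)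
          + A 1 1 * (A 0 1 * Real.cos θ + A 1 1 * Real.sin θ))) := by
    simp [hM, hv, xiMat, FermiPhi, Matrix.mulVec, dotProduct, Fin.sum_univ_four,
      Matrix.vecHead, Matrix.vecTail]
    ring
  -- derivatives of psiFun
  have hpsiθ : deriv (fun θ' => psiFun A θ' φ) θ
      = A 1 0 * Real.cos θ * Real.cos φ + A 1 1 * Real.cos θ * Real.sin φ
        - A 0 0 * Real.sin θ * Real.cos φ - A 0 1 * Real.sin θ * Real.sin φ := by
    have hd : HasDerivAt (fun θ' => psiFun A θ' φ)
        ((A 0 0 * -Real.sin θ) * Real.cos φ + (A 0 1 * -Real.sin θ) * Real.sin φ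
          + (A 1 0 * Real.cos θ) * Real.cos φ + (A 1 1 * Real.cos θ) * Real.sin φ) θ := by
      unfold psiFun
      exact ((((((Real.hasDerivAt_cos θ).const_mul (A 0 0)).mul_const (Real.cos φ)).add
        (((Real.hasDerivAt_cos θ).const_mul (A 0 1)).mul_const (Real.sin φ))).add
        (((Real.hasDerivAt_sin θ).const_mul (A 1 0)).mul_const (Real.cos φ))).add
        (((Real.hasDerivAt_sin θ).const_mul (A 1 1)).mul_const (Real.sin φ)))
    rw [hd.deriv]; ring
  have hpsiφ : deriv (fun φ' => psiFun A θ φ') φ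
      = A 0 1 * Real.cos θ * Real.cos φ + A 1 1 * Real.sin θ * Real.cos φ
        - A 0 0 * Real.cos θ * Real.sin φ - A 1 0 * Real.sin θ * Real.sin φ := by
    have hd : HasDerivAt (fun φ' => psiFun A θ φ')
        ((A 0 0 * Real.cos θ) * -Real.sin φ + (A 0 1 * Real.cos θ) * Real.cos φ
          + (A 1 0 * Real.sin θ) * -Real.sin φ + (A 1 1 * Real.sin θ) * Real.cos φ) φ := by
      unfold psiFun
      exact (((((Real.hasDerivAt_cos φ).const_mul (A 0 0 * Real.cos θ)).add
        (((Real.hasDerivAt_sin φ).const_mul (A 0 1 * Real.cos θ)))).add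
        (((Real.hasDerivAt_cos φ).const_mul (A 1 0 * Real.sin θ)))).add
        (((Real.hasDerivAt_sin φ).const_mul (A 1 1 * Real.sin θ))))
    rw [hd.deriv]; ring
  -- the function F
  set F := fun t : ℝ => X t 0 ^ 2 + X t 1 ^ 2 with hFdef
  have hFd : ∀ t : ℝ, HasDerivAt F (2 * X t 0 * Y t 0 + 2 * X t 1 * Y t 1) t := by
    intro t
    have : HasDerivAt F _ t := ((hXd 0 t).pow 2).add ((hXd 1 t).pow 2)
    simpa [pow_one, mul_comm, mul_assoc, mul_left_comm] using this
  have hF' : deriv F = fun t => 2 * X t 0 * Y t 0 + 2 * X t 1 * Y t 1 :=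
    funext fun t => (hFd t).deriv
  -- the key identity sin (2 H) = 2 F - 1 on Ioo
  have eF : ∀ t ∈ Set.Ioo (-ε) ε, Real.sin (2 * H t) = 2 * F t - 1 := by
    intro t ht
    have h0 := e0 t ht
    have h1 := e1 t ht
    have hp : Real.sin (a t) ^ 2 + Real.cos (a t) ^ 2 = 1 := Real.sin_sq_add_cos_sq _
    have hp2 : Real.sin (π/4 + H t) ^ 2 + Real.cos (π/4 + H t) ^ 2 = 1 :=
      Real.sin_sq_add_cos_sq _
    have h2m : Real.cos (2 * (π/4 + H t)) = 2 * Real.cos (π/4 + H t) ^ 2 - 1 :=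
      Real.cos_two_mul _
    have h2e : Real.cos (2 * (π/4 + H t)) = -Real.sin (2 * H t) := by
      rw [show 2 * (π/4 + H t) = π/2 + 2 * H t by ring]
      simp [Real.cos_add]
    have hFt : F t = Real.sin (π/4 + H t) ^ 2 := by
      rw [show F t = X t 0 ^ 2 + X t 1 ^ 2 from rfl, h0, h1]
      linear_combination Real.sin (π/4 + H t) ^ 2 * hp
    rw [hFt]
    linear_combination -2 * hp2 - h2m + h2e
  -- differentiate the key identity on Ioo
  have eD : ∀ t ∈ Set.Ioo (-ε) ε,
      Real.cos (2 * H t) * (2 * deriv H t) = 2 * deriv F t := by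
    intro t ht
    have hHt : HasDerivAt H (deriv H t) t := (hHdiff t ht).hasDerivAt
    have hL : HasDerivAt (fun s => Real.sin (2 * H s))
        (Real.cos (2 * H t) * (2 * deriv H t)) t :=
      (hHt.const_mul 2).sin
    have hR : HasDerivAt (fun s => 2 * F s - 1)
        (2 * (2 * X t 0 * Y t 0 + 2 * X t 1 * Y t 1)) t := ((hFd t).const_mul 2).sub_const 1
    have heq : (fun s => Real.sin (2 * H s)) =ᶠ[nhds t] (fun s => 2 * F s - 1) :=
      Filter.eventuallyEq_of_mem (isOpen_Ioo.mem_nhds ht) (fun s hs => eF s hs)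
    have hde := heq.deriv_eq
    rw [hL.deriv, hR.deriv] at hde
    rw [hde, (hFd t).deriv]
  -- first derivative of H at 0
  have gH1 : deriv H 0 = psiFun A θ φ := by
    have hd0 := eD 0 h0mem
    rw [Ha0, (hFd 0).deriv] at hd0
    simp only [mul_zero, Real.cos_zero, one_mul] at hd0
    have hY00 : Y 0 0 = (M *ᵥ v) 0 := by simp [hYdef, NormedSpace.exp_zero]
    have hY01 : Y 0 1 = (M *ᵥ v) 1 := by simp [hYdef, NormedSpace.exp_zero]
    rw [hX0 0, hX0 1, hY00, hY01, hv0, hv1, hMv0, hMv1] at hd0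
    have : deriv H 0 = 2 * (Real.sin (π/4) * Real.cos θ)
        * (Real.sin (π/4) * (A 0 0 * Real.cos φ + A 0 1 * Real.sin φ))
        + 2 * (Real.sin (π/4) * Real.sin θ)
        * (Real.sin (π/4) * (A 1 0 * Real.cos φ + A 1 1 * Real.sin φ)) := by linarith
    rw [this]
    unfold psiFun
    linear_combination (2 * Real.cos θ * (A 0 0 * Real.cos φ + A 0 1 * Real.sin φ)
      + 2 * Real.sin θ * (A 1 0 * Real.cos φ + A 1 1 * Real.sin φ)) * hs2
  -- second derivative of F at 0
  have hY00 : Y 0 0 = (M *ᵥ v) 0 := by simp [hYdef, NormedSpace.exp_zero]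
  have hY01 : Y 0 1 = (M *ᵥ v) 1 := by simp [hYdef, NormedSpace.exp_zero]
  have hdf : HasDerivAt (deriv F)
      (2 * (M *ᵥ v) 0 * (M *ᵥ v) 0 + 2 * v 0 * (M *ᵥ (M *ᵥ v)) 0
        + (2 * (M *ᵥ v) 1 * (M *ᵥ v) 1 + 2 * v 1 * (M *ᵥ (M *ᵥ v)) 1)) 0 := by
    rw [hF']
    have : HasDerivAt (fun t => 2 * X t 0 * Y t 0 + 2 * X t 1 * Y t 1) _ 0 :=
      (((hXd0 0).const_mul 2).mul (hYd0 0)).add (((hXd0 1).const_mul 2).mul (hYd0 1))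
    simpa [hX0, hY00, hY01, mul_comm, mul_assoc, mul_left_comm] using this
  -- second derivative of H at 0
  have gH2 : deriv (deriv H) 0
      = 2 * (M *ᵥ v) 0 * (M *ᵥ v) 0 + 2 * v 0 * (M *ᵥ (M *ᵥ v)) 0
        + (2 * (M *ᵥ v) 1 * (M *ᵥ v) 1 + 2 * v 1 * (M *ᵥ (M *ᵥ v)) 1) := by
    have hgL : HasDerivAt (fun t => Real.cos (2 * H t) * (2 * deriv H t))
        ((-Real.sin (2 * H 0) * (2 * deriv H 0)) * (2 * deriv H 0)
          + Real.cos (2 * H 0) * (2 * deriv (deriv H) 0)) 0 :=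
      (((hH0d.const_mul 2).cos).mul (hH'd0.const_mul 2))
    have hgR := hdf.const_mul 2
    have heq : (fun t => Real.cos (2 * H t) * (2 * deriv H t))
        =ᶠ[nhds 0] (fun t => 2 * deriv F t) :=
      Filter.eventuallyEq_of_mem (isOpen_Ioo.mem_nhds h0mem) (fun s hs => eD s hs)
    have hde := heq.deriv_eq
    rw [hgL.deriv, hgR.deriv] at hde
    rw [Ha0] at hde
    simp only [mul_zero, Real.sin_zero, Real.cos_zero, one_mul, neg_zero, zero_mul,
      zero_add] at hde
    linarith
  refine ⟨gH1, ?_, ?_⟩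
  · -- derivative of α at 0
    -- equations for the first derivative of the angles
    have hsin_add : HasDerivAt (fun t => Real.sin (π/4 + H t))
        (Real.cos (π/4 + H 0) * deriv H 0) 0 :=
      (hH0d.const_add (π/4)).sin
    have hsin_sub : HasDerivAt (fun t => Real.sin (π/4 - H t))
        (Real.cos (π/4 - H 0) * -deriv H 0) 0 :=
      (hH0d.const_sub (π/4)).sin
    have hcos_a : HasDerivAt (fun t => Real.cos (a t)) (-Real.sin (a 0) * deriv a 0) 0 :=
      (Real.hasDerivAt_cos (a 0)).comp 0 haD
    have hsin_a : HasDerivAt (fun t => Real.sin (a t)) (Real.cos (a 0) * deriv a 0) 0 :=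
      (Real.hasDerivAt_sin (a 0)).comp 0 haD
    have hcos_b : HasDerivAt (fun t => Real.cos (b t)) (-Real.sin (b 0) * deriv b 0) 0 :=
      (Real.hasDerivAt_cos (b 0)).comp 0 hbD
    have hsin_b : HasDerivAt (fun t => Real.sin (b t)) (Real.cos (b 0) * deriv b 0) 0 :=
      (Real.hasDerivAt_sin (b 0)).comp 0 hbD
    have EA0 : (M *ᵥ v) 0 = (Real.cos (π/4) * deriv H 0) * Real.cos θ
        + Real.sin (π/4) * (-Real.sin θ * deriv a 0) := by
      have heq : (fun t => X t 0)
          =ᶠ[nhds 0] (fun t => Real.sin (π/4 + H t) * Real.cos (a t)) :=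
        Filter.eventuallyEq_of_mem (isOpen_Ioo.mem_nhds h0mem) (fun s hs => e0 s hs)
      have hde := heq.deriv_eq
      rw [(hXd0 0).deriv, (show HasDerivAt (fun t => Real.sin (π/4 + H t) * Real.cos (a t)) _ 0 from hsin_add.mul hcos_a).deriv] at hde
      rw [Ha0, Haa0, add_zero] at hde
      linear_combination hde
    have EA1 : (M *ᵥ v) 1 = (Real.cos (π/4) * deriv H 0) * Real.sin θ
        + Real.sin (π/4) * (Real.cos θ * deriv a 0) := by
      have heq : (fun t => X t 1)
          =ᶠ[nhds 0] (fun t => Real.sin (π/4 + H t) * Real.sin (a t)) :=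
        Filter.eventuallyEq_of_mem (isOpen_Ioo.mem_nhds h0mem) (fun s hs => e1 s hs)
      have hde := heq.deriv_eq
      rw [(hXd0 1).deriv, (show HasDerivAt (fun t => Real.sin (π/4 + H t) * Real.sin (a t)) _ 0 from hsin_add.mul hsin_a).deriv] at hde
      rw [Ha0, Haa0, add_zero] at hde
      linear_combination hde
    have EB0 : (M *ᵥ v) 2 = (Real.cos (π/4) * -deriv H 0) * Real.cos φ
        + Real.sin (π/4) * (-Real.sin φ * deriv b 0) := by
      have heq : (fun t => X t 2)
          =ᶠ[nhds 0] (fun t => Real.sin (π/4 - H t) * Real.cos (b t)) :=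
        Filter.eventuallyEq_of_mem (isOpen_Ioo.mem_nhds h0mem) (fun s hs => e2 s hs)
      have hde := heq.deriv_eq
      rw [(hXd0 2).deriv, (show HasDerivAt (fun t => Real.sin (π/4 - H t) * Real.cos (b t)) _ 0 from hsin_sub.mul hcos_b).deriv] at hde
      rw [Ha0, Hbb0, sub_zero] at hde
      linear_combination hde
    have EB1 : (M *ᵥ v) 3 = (Real.cos (π/4) * -deriv H 0) * Real.sin φ
        + Real.sin (π/4) * (Real.cos φ * deriv b 0) := by
      have heq : (fun t => X t 3)
          =ᶠ[nhds 0] (fun t => Real.sin (π/4 - H t) * Real.sin (b t)) :=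
        Filter.eventuallyEq_of_mem (isOpen_Ioo.mem_nhds h0mem) (fun s hs => e3 s hs)
      have hde := heq.deriv_eq
      rw [(hXd0 3).deriv, (show HasDerivAt (fun t => Real.sin (π/4 - H t) * Real.sin (b t)) _ 0 from hsin_sub.mul hsin_b).deriv] at hde
      rw [Ha0, Hbb0, sub_zero] at hde
      linear_combination hde
    have pθ : Real.sin θ ^ 2 + Real.cos θ ^ 2 = 1 := Real.sin_sq_add_cos_sq θ
    have pφ : Real.sin φ ^ 2 + Real.cos φ ^ 2 = 1 := Real.sin_sq_add_cos_sq φ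
    have keya : Real.sin (π/4) * deriv a 0
        = Real.sin (π/4) * (A 1 0 * Real.cos θ * Real.cos φ + A 1 1 * Real.cos θ * Real.sin φ
            - A 0 0 * Real.sin θ * Real.cos φ - A 0 1 * Real.sin θ * Real.sin φ) := by
      rw [hMv0] at EA0; rw [hMv1] at EA1
      linear_combination Real.sin θ * EA0 - Real.cos θ * EA1
        - (Real.sin (π/4) * deriv a 0) * pθ
    have keyb : Real.sin (π/4) * deriv b 0
        = Real.sin (π/4) * (-(A 0 1 * Real.cos θ * Real.cos φ + A 1 1 * Real.sin θ * Real.cos φ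
            - A 0 0 * Real.cos θ * Real.sin φ - A 1 0 * Real.sin θ * Real.sin φ)) := by
      rw [hMv2] at EB0; rw [hMv3] at EB1
      linear_combination Real.sin φ * EB0 - Real.cos φ * EB1
        - (Real.sin (π/4) * deriv b 0) * pφ
    have ha1 : deriv a 0 = deriv (fun θ' => psiFun A θ' φ) θ := by
      rw [hpsiθ]; exact mul_left_cancel₀ hsne keya
    have hb1 : deriv b 0 = -deriv (fun φ' => psiFun A θ φ') φ := by
      rw [hpsiφ]
      have := mul_left_cancel₀ hsne keyb
      linarith
    have hpair : (fun t => α (t, θ, φ)) = fun t => (a t, b t) := by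
      funext t; simp [ha, hb]
    have hαd : HasDerivAt (fun t => α (t, θ, φ)) (deriv a 0, deriv b 0) 0 := by
      rw [hpair]; exact haD.prodMk hbD
    rw [hαd.deriv, ha1, hb1]
  · -- second derivative identity
    rw [gH2, hv0, hv1, hMv0, hMv1, hZ0, hZ1, hpsiθ, hpsiφ]
    have pθ : Real.sin θ ^ 2 + Real.cos θ ^ 2 = 1 := Real.sin_sq_add_cos_sq θ
    have pφ : Real.sin φ ^ 2 + Real.cos φ ^ 2 = 1 := Real.sin_sq_add_cos_sq φ
    linear_combination
      (2 * ((A 0 0 * Real.cos φ + A 0 1 * Real.sin φ) ^ 2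
          + (A 1 0 * Real.cos φ + A 1 1 * Real.sin φ) ^ 2
          - (A 0 0 * Real.cos θ + A 1 0 * Real.sin θ) ^ 2
          - (A 0 1 * Real.cos θ + A 1 1 * Real.sin θ) ^ 2)) * hs2
      - ((A 0 0 * Real.cos φ + A 0 1 * Real.sin φ) ^ 2
          + (A 1 0 * Real.cos φ + A 1 1 * Real.sin φ) ^ 2) * pθ
      + ((A 0 0 * Real.cos θ + A 1 0 * Real.sin θ) ^ 2
          + (A 0 1 * Real.cos θ + A 1 1 * Real.sin θ) ^ 2) * pφ
end

section
/- Let A be a nonzero special 2×2 real matrix (a scalar multiple of an orthogonal matrix), and let B be a nonzero 2×2 real matrix that is not a scalar multiple of A. Then the set of points (θ,φ) ∈ Z_A at which ψ_B(θ,φ) − ((∂ψ_A/∂θ)(θ,φ))² + ((∂ψ_A/∂φ)(θ,φ))² ≠ 0 is open and dense in Z_A (with the subspace topology from ℝ²). -/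
open Real Matrix

/-- The quantity `ψ_B − (∂ψ_A/∂θ)² + (∂ψ_A/∂φ)²` evaluated at `p = (θ,φ)`. -/
noncomputable def secondDerivQuantity (A B : Matrix (Fin 2) (Fin 2) ℝ) (p : ℝ × ℝ) : ℝ :=
  psiFun B p.1 p.2 - (deriv (fun θ' => psiFun A θ' p.2) p.1) ^ 2
    + (deriv (fun φ' => psiFun A p.1 φ') p.2) ^ 2

/-!
A special matrix has the form `[[a, b], [-ε b, ε a]]` with `ε = ±1`, so `ψ_A(θ, φ) = f (θ - ε φ)`
for a sinusoid `f`. Hence `∂ψ_A/∂φ = -ε ∂ψ_A/∂θ`, the quantity reduces to `ψ_B`, and `Z_A` is a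
union of lines of slope `ε`. If `ψ_B` vanished on a piece of `Z_A`, it would vanish on a whole
such line by analyticity; but the matrices whose `ψ` vanishes on a given line of slope `ε` form
a one-dimensional space, which contains `A`.
-/

open Filter Topology Set

lemma psiFun_sub_smul (A B : Matrix (Fin 2) (Fin 2) ℝ) (c θ φ : ℝ) :
    psiFun (B - c • A) θ φ = psiFun B θ φ - c * psiFun A θ φ := by
  simp only [psiFun, Matrix.sub_apply, Matrix.smul_apply, smul_eq_mul]
  ring

lemma continuous_psiFun (A : Matrix (Fin 2) (Fin 2) ℝ) :
    Continuous fun p : ℝ × ℝ => psiFun A p.1 p.2 := by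
  unfold psiFun
  fun_prop

lemma psiFun_add_add (A : Matrix (Fin 2) (Fin 2) ℝ) (θ φ s t : ℝ) :
    psiFun A (θ + s) (φ + t) =
      cos s * cos t * psiFun A θ φ + cos s * sin t * psiFun A θ (φ + π / 2) +
        sin s * cos t * psiFun A (θ + π / 2) φ +
          sin s * sin t * psiFun A (θ + π / 2) (φ + π / 2) := by
  simp only [psiFun, cos_add, sin_add, cos_pi_div_two, sin_pi_div_two]
  ring

lemma exists_sign_of_mul_transpose_eq_smul_one {A : Matrix (Fin 2) (Fin 2) ℝ} {c : ℝ}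
    (h : A * Aᵀ = c • 1) :
    ∃ ε : ℝ, (ε = 1 ∨ ε = -1) ∧ A 1 0 = -(ε * A 0 1) ∧ A 1 1 = ε * A 0 0 := by
  have h00 := congrFun₂ h 0 0
  have h01 := congrFun₂ h 0 1
  have h11 := congrFun₂ h 1 1
  simp only [mul_apply, transpose_apply, Fin.sum_univ_two, Matrix.smul_apply, smul_eq_mul,
    one_apply_eq, one_apply_ne zero_ne_one, mul_one, mul_zero] at h00 h01 h11
  by_cases hr : A 0 0 * A 0 0 + A 0 1 * A 0 1 = 0
  · have hA1 : A 1 0 = 0 ∧ A 1 1 = 0 := by constructor <;> nlinarith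
    have hA0 : A 0 0 = 0 ∧ A 0 1 = 0 := by constructor <;> nlinarith
    exact ⟨1, Or.inl rfl, by simp [hA0, hA1]⟩
  · set ε := (A 0 0 * A 1 1 - A 0 1 * A 1 0) / (A 0 0 * A 0 0 + A 0 1 * A 0 1) with hε_def
    have h10 : A 1 0 = -(ε * A 0 1) := by
      rw [hε_def, div_mul_eq_mul_div, ← neg_div, eq_div_iff hr]
      linear_combination A 0 0 * h01
    have h11' : A 1 1 = ε * A 0 0 := by
      rw [hε_def, div_mul_eq_mul_div, eq_div_iff hr]
      linear_combination A 0 1 * h01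
    refine ⟨ε, mul_self_eq_one_iff.mp (mul_right_cancel₀ hr ?_), h10, h11'⟩
    rw [h10, h11'] at h11
    linear_combination h11 - h00

lemma psiFun_eq_of_sign {A : Matrix (Fin 2) (Fin 2) ℝ} {ε : ℝ} (hε : ε = 1 ∨ ε = -1)
    (h10 : A 1 0 = -(ε * A 0 1)) (h11 : A 1 1 = ε * A 0 0) (θ φ : ℝ) :
    psiFun A θ φ = A 0 0 * cos (θ - ε * φ) - ε * A 0 1 * sin (θ - ε * φ) := by
  rw [psiFun, h10, h11]
  rcases hε with rfl | rfl
  · simp only [one_mul, cos_sub, sin_sub]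
    ring
  · simp only [neg_one_mul, sub_neg_eq_add, cos_add, sin_add]
    ring

lemma secondDerivQuantity_eq_psiFun {A B : Matrix (Fin 2) (Fin 2) ℝ} {ε : ℝ} {f : ℝ → ℝ}
    (hε : ε = 1 ∨ ε = -1) (hf : ∀ θ φ, psiFun A θ φ = f (θ - ε * φ)) (p : ℝ × ℝ) :
    secondDerivQuantity A B p = psiFun B p.1 p.2 := by
  simp only [secondDerivQuantity, hf]
  rcases hε with rfl | rfl
  · simp only [one_mul, deriv_comp_sub_const, deriv_comp_const_sub, neg_sq]
    ring
  · simp only [neg_one_mul, sub_neg_eq_add, deriv_comp_add_const, deriv_comp_const_add]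
    ring

lemma psiFun_line_eq {A : Matrix (Fin 2) (Fin 2) ℝ} {ε : ℝ} {f : ℝ → ℝ}
    (hε : ε = 1 ∨ ε = -1) (hf : ∀ θ φ, psiFun A θ φ = f (θ - ε * φ)) (θ φ s : ℝ) :
    psiFun A (θ + s) (φ + ε * s) = psiFun A θ φ := by
  rw [hf, hf]
  congr 1
  rcases hε with rfl | rfl <;> ring

lemma eq_zero_of_psiFun_quarter_turns {A : Matrix (Fin 2) (Fin 2) ℝ} {θ φ : ℝ}
    (h00 : psiFun A θ φ = 0) (h01 : psiFun A θ (φ + π / 2) = 0)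
    (h10 : psiFun A (θ + π / 2) φ = 0) (h11 : psiFun A (θ + π / 2) (φ + π / 2) = 0) :
    A = 0 := by
  have hψ (x y : ℝ) : psiFun A x y = 0 := by
    simpa [h00, h01, h10, h11] using psiFun_add_add A θ φ (x - θ) (y - φ)
  have e00 := hψ 0 0
  have e01 := hψ 0 (π / 2)
  have e10 := hψ (π / 2) 0
  have e11 := hψ (π / 2) (π / 2)
  simp only [psiFun, cos_zero, sin_zero, cos_pi_div_two, sin_pi_div_two, mul_one, mul_zero,
    add_zero, zero_add] at e00 e01 e10 e11
  ext i j
  fin_cases i <;> fin_cases j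
  exacts [e00, e01, e10, e11]

lemma eq_zero_of_psiFun_line_eq_zero {A : Matrix (Fin 2) (Fin 2) ℝ} {θ φ ε : ℝ}
    (hε : ε = 1 ∨ ε = -1) (hline : ∀ s, psiFun A (θ + s) (φ + ε * s) = 0)
    (hperp : psiFun A (θ + π / 2) φ = 0) : A = 0 := by
  have hexp (s : ℝ) := (psiFun_add_add A θ φ s (ε * s)).symm.trans (hline s)
  have h00 : psiFun A θ φ = 0 := by simpa using hline 0
  have h11 : psiFun A (θ + π / 2) (φ + π / 2) = 0 := by
    rcases hε with rfl | rfl <;> simpa using hexp (π / 2)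
  have h01 : psiFun A θ (φ + π / 2) = 0 := by
    rcases hε with rfl | rfl <;>
      simpa [h00, h11, hperp, cos_pi_div_four, sin_pi_div_four] using hexp (π / 4)
  exact eq_zero_of_psiFun_quarter_turns h00 h01 hperp h11

lemma exists_eq_smul_of_psiFun_line_eq_zero {A B : Matrix (Fin 2) (Fin 2) ℝ} {θ φ ε : ℝ}
    (hε : ε = 1 ∨ ε = -1) (hA : A ≠ 0) (hAline : ∀ s, psiFun A (θ + s) (φ + ε * s) = 0)
    (hBline : ∀ s, psiFun B (θ + s) (φ + ε * s) = 0) : ∃ c : ℝ, B = c • A := by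
  have hperp : psiFun A (θ + π / 2) φ ≠ 0 := fun h =>
    hA (eq_zero_of_psiFun_line_eq_zero hε hAline h)
  refine ⟨psiFun B (θ + π / 2) φ / psiFun A (θ + π / 2) φ, sub_eq_zero.mp ?_⟩
  refine eq_zero_of_psiFun_line_eq_zero (θ := θ) (φ := φ) hε (fun s => ?_) ?_ <;>
    rw [psiFun_sub_smul]
  · rw [hAline, hBline, mul_zero, sub_zero]
  · rw [div_mul_cancel₀ _ hperp, sub_self]

lemma psiFun_line_eq_zero_of_eventually {A : Matrix (Fin 2) (Fin 2) ℝ} {θ φ ε : ℝ}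
    (h : ∀ᶠ s in 𝓝 0, psiFun A (θ + s) (φ + ε * s) = 0) (s : ℝ) :
    psiFun A (θ + s) (φ + ε * s) = 0 := by
  have hana : AnalyticOnNhd ℝ (fun s => psiFun A (θ + s) (φ + ε * s)) univ := fun _ _ => by
    unfold psiFun
    fun_prop
  exact congrFun (hana.eq_of_eventuallyEq analyticOnNhd_const h) s

lemma dense_setOf_psiFun_ne_zero {A B : Matrix (Fin 2) (Fin 2) ℝ} {ε : ℝ} {f : ℝ → ℝ}
    (hε : ε = 1 ∨ ε = -1) (hf : ∀ θ φ, psiFun A θ φ = f (θ - ε * φ)) (hA : A ≠ 0)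
    (hB : ¬∃ c : ℝ, B = c • A) :
    Dense {q : {p : ℝ × ℝ // psiFun A p.1 p.2 = 0} | psiFun B q.1.1 q.1.2 ≠ 0} := by
  rintro ⟨⟨θ, φ⟩, hq₀⟩
  have hAline (s : ℝ) := (psiFun_line_eq hε hf θ φ s).trans hq₀
  let line (s : ℝ) : {p : ℝ × ℝ // psiFun A p.1 p.2 = 0} := ⟨(θ + s, φ + ε * s), hAline s⟩
  have hline : Tendsto line (𝓝 0) (𝓝 ⟨(θ, φ), hq₀⟩) := by
    have : Continuous line := by fun_prop
    simpa [line] using this.tendsto 0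
  refine mem_closure_iff_frequently.mpr (hline.frequently fun hzero => hB ?_)
  exact exists_eq_smul_of_psiFun_line_eq_zero hε hA hAline
    (psiFun_line_eq_zero_of_eventually (hzero.mono fun _ => not_not.mp))

theorem second_derivative_nonvanishing_special_general
    (A : Matrix (Fin 2) (Fin 2) ℝ) (hA : A ≠ 0)
    (hA_special : ∃ c : ℝ, A * Aᵀ = c • (1 : Matrix (Fin 2) (Fin 2) ℝ))
    (B : Matrix (Fin 2) (Fin 2) ℝ)
    (hB_notColinear : ¬∃ c : ℝ, B = c • A) :
    IsOpen {q : {p : ℝ × ℝ // psiFun A p.1 p.2 = 0} | secondDerivQuantity A B q.val ≠ 0} ∧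
    Dense {q : {p : ℝ × ℝ // psiFun A p.1 p.2 = 0} | secondDerivQuantity A B q.val ≠ 0} := by
  obtain ⟨c, hc⟩ := hA_special
  obtain ⟨ε, hε, h10, h11⟩ := exists_sign_of_mul_transpose_eq_smul_one hc
  obtain ⟨f, hf⟩ : ∃ f : ℝ → ℝ, ∀ θ φ, psiFun A θ φ = f (θ - ε * φ) :=
    ⟨fun t => A 0 0 * cos t - ε * A 0 1 * sin t, psiFun_eq_of_sign hε h10 h11⟩
  simp only [secondDerivQuantity_eq_psiFun hε hf]
  exact ⟨isOpen_ne_fun ((continuous_psiFun B).comp continuous_subtype_val) continuous_const,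
    dense_setOf_psiFun_ne_zero hε hf hA hB_notColinear⟩

theorem second_derivative_nonvanishing_special
    (A : Matrix (Fin 2) (Fin 2) ℝ) (hA : A ≠ 0)
    (hA_special : ∃ c : ℝ, A * Aᵀ = c • (1 : Matrix (Fin 2) (Fin 2) ℝ))
    (B : Matrix (Fin 2) (Fin 2) ℝ) (hB : B ≠ 0)
    (hB_notColinear : ¬∃ c : ℝ, B = c • A) :
    IsOpen {q : {p : ℝ × ℝ // psiFun A p.1 p.2 = 0} | secondDerivQuantity A B q.val ≠ 0} ∧
    Dense {q : {p : ℝ × ℝ // psiFun A p.1 p.2 = 0} | secondDerivQuantity A B q.val ≠ 0} :=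
  second_derivative_nonvanishing_special_general A hA hA_special B hB_notColinear
end
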